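/- Assume k₂ = 4 − k₁ and that the multiset {k₁, k₂, k₃} is not equal to {−2, 0, 4}. Let w = (x⁻¹, 0, 0, 0, 0, (k₃/2)·x⁻²) (components in the order (a₁₂, a₁₃, a₂₃, b₁, b₂, b₃)). Then E(w) ∈ B, F(w) ∈ B, w ∉ B, and for every z ∈ V with E(z) ∈ B, F(z) ∈ B and z ∉ B there exists A ∈ G such that Int A(w) − z ∈ B. In other words, there exists a unique up to isomorphism 𝔰-even-homogeneous non-split supermanifold with retract (k₁, 4−k₁, k₃), corresponding to the class of w. -/

import Mathlib

noncomputable section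

open LaurentPolynomial

/-- `L = ℂ[x, x⁻¹]`, the Laurent polynomials over `ℂ`. -/
abbrev L : Type := LaurentPolynomial ℂ

/-- The coefficient of `x^n` in a Laurent polynomial. -/
def coeffL (p : L) (n : ℤ) : ℂ := (AddMonoidAlgebra.coeff p : ℤ →₀ ℂ) n

lemma coeffL_zero (n : ℤ) : coeffL 0 n = 0 := rfl

lemma coeffL_add (a b : L) (n : ℤ) : coeffL (a + b) n = coeffL a n + coeffL b n := by
  unfold coeffL; first | rfl | simp

lemma coeffL_smul (c : ℂ) (a : L) (n : ℤ) : coeffL (c • a) n = c * coeffL a n := by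
  unfold coeffL; first | rfl | simp

/-- `L₊`: Laurent polynomials involving only nonnegative powers of `x`. -/
def Lplus : Submodule ℂ L where
  carrier := {p | ∀ n : ℤ, n < 0 → coeffL p n = 0}
  zero_mem' := fun n _ => coeffL_zero n
  add_mem' := by intro a b ha hb n hn; rw [coeffL_add, ha n hn, hb n hn, add_zero]
  smul_mem' := by intro c p hp n hn; rw [coeffL_smul, hp n hn, mul_zero]

/-- `L₋`: Laurent polynomials involving only nonpositive powers of `x`. -/
def Lminus : Submodule ℂ L where
  carrier := {p | ∀ n : ℤ, 0 < n → coeffL p n = 0}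
  zero_mem' := fun n _ => coeffL_zero n
  add_mem' := by intro a b ha hb n hn; rw [coeffL_add, ha n hn, hb n hn, add_zero]
  smul_mem' := by intro c p hp n hn; rw [coeffL_smul, hp n hn, mul_zero]

/-- The derivative `d/dx` on Laurent polynomials. -/
def D (p : L) : L := Finsupp.sum (AddMonoidAlgebra.coeff p : ℤ →₀ ℂ) fun n a => ((n : ℂ) * a) • T (n - 1)

/-- `V = L⁶`, the model of Čech 1-cochains with values in `T₂`: a tuple
`v = (a₁₂, a₁₃, a₂₃, b₁, b₂, b₃)` (components `v 0, …, v 5`) encodes the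
vector field `Σ_{i<j} a_{ij}(x)ξᵢξⱼ∂/∂x + Σ_t b_t(x)ξ₁ξ₂ξ₃∂/∂ξ_t` on `U₀ ∩ U₁`. -/
abbrev V : Type := Fin 6 → L

/-- `B₀ = (L₊)⁶`: cochains holomorphic in `U₀`. -/
def B0 : Submodule ℂ V := Submodule.pi Set.univ fun _ => Lplus

/-- The linear map `v ↦ x^m · (v i)`. -/
def cndA (m : ℤ) (i : Fin 6) : V →ₗ[ℂ] L :=
  (LinearMap.mulLeft ℂ (T m)).comp (LinearMap.proj i)

/-- The linear map `v ↦ x^m · (v i − c·x⁻¹·(v j))`. -/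
def cndB (m : ℤ) (c : ℂ) (i j : Fin 6) : V →ₗ[ℂ] L :=
  (LinearMap.mulLeft ℂ (T m)).comp
    (LinearMap.proj i - c • (LinearMap.mulLeft ℂ (T (-1))).comp (LinearMap.proj j))

/-- `B₁`: cochains holomorphic in `U₁`, i.e. `v` with
`x^(kᵢ+kⱼ−2)·a_{ij} ∈ L₋` for all `i < j` and
`x^(d−k_t)·(b_t − σ_t·k_t·x⁻¹·a_{(t)}) ∈ L₋` for `t = 1, 2, 3`
(σ₁ = 1, σ₂ = −1, σ₃ = 1, a₍₁₎ = a₂₃, a₍₂₎ = a₁₃, a₍₃₎ = a₁₂, d = k₁+k₂+k₃). -/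
def B1 (k1 k2 k3 : ℤ) : Submodule ℂ V :=
  Lminus.comap (cndA (k1 + k2 - 2) 0) ⊓
  Lminus.comap (cndA (k1 + k3 - 2) 1) ⊓
  Lminus.comap (cndA (k2 + k3 - 2) 2) ⊓
  Lminus.comap (cndB (k2 + k3) ((k1 : ℂ)) 3 2) ⊓
  Lminus.comap (cndB (k1 + k3) (-(k2 : ℂ)) 4 1) ⊓
  Lminus.comap (cndB (k1 + k2) ((k3 : ℂ)) 5 0)

/-- The coboundary subspace `B = B₀ + B₁`. -/
def B (k1 k2 k3 : ℤ) : Submodule ℂ V := B0 ⊔ B1 k1 k2 k3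

/-- Action of `e = ∂/∂x` on cocycles: the componentwise derivative. -/
def Eop : V → V := fun v i => D (v i)

/-- Action of `f = ∂/∂y` on cocycles, with components
`a_{ij} ↦ (2 − kᵢ − kⱼ)·x·a_{ij} − x²·a_{ij}′` and
`b_t ↦ σ_t·k_t·a₍ₜ₎ − (d − k_t)·x·b_t − x²·b_t′`. -/
def Fop (k1 k2 k3 : ℤ) : V → V := fun v =>
  ![((2 - k1 - k2 : ℤ) : ℂ) • (T 1 * v 0) - T 2 * D (v 0),
    ((2 - k1 - k3 : ℤ) : ℂ) • (T 1 * v 1) - T 2 * D (v 1),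
    ((2 - k2 - k3 : ℤ) : ℂ) • (T 1 * v 2) - T 2 * D (v 2),
    (k1 : ℂ) • v 2 - ((k2 + k3 : ℤ) : ℂ) • (T 1 * v 3) - T 2 * D (v 3),
    -((k2 : ℂ) • v 1) - ((k1 + k3 : ℤ) : ℂ) • (T 1 * v 4) - T 2 * D (v 4),
    (k3 : ℂ) • v 0 - ((k1 + k2 : ℤ) : ℂ) • (T 1 * v 5) - T 2 * D (v 5)]

/-- `N(v) = (0, 0, a₁₃, −b₂, 0, 0)`; `e′ = ∂/∂x + ξ₂∂/∂ξ₁` acts by `E′ = E + N`. -/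
def Nop : V → V := fun v => ![0, 0, v 1, -v 4, 0, 0]

/-- `M(v) = (0, a₂₃, 0, 0, −b₁, 0)`; `f′ = ∂/∂y + η₁∂/∂η₂` acts by `F′ = F + M`. -/
def Mop : V → V := fun v => ![0, v 2, 0, 0, -v 3, 0]

/-- The action `E′ = E + N` of `e′ = ∂/∂x + ξ₂∂/∂ξ₁`. -/
def E'op : V → V := fun v => Eop v + Nop v

/-- The action `F′ = F + M` of `f′ = ∂/∂y + η₁∂/∂η₂`. -/
def F'op (k1 k2 k3 : ℤ) : V → V := fun v => Fop k1 k2 k3 v + Mop v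

/-- `N″(v) = (0, a₁₂, a₁₃, −b₂, −b₃, 0)`;
`e″ = ∂/∂x + ξ₂∂/∂ξ₁ + ξ₃∂/∂ξ₂` acts by `E″ = E + N″`. -/
def N''op : V → V := fun v => ![0, v 0, v 1, -v 4, -v 5, 0]

/-- `M″(v) = (2a₁₃, 2a₂₃, 0, 0, −2b₁, −2b₂)`;
`f″ = ∂/∂y + 2η₁∂/∂η₂ + 2η₂∂/∂η₃` acts by `F″ = F + M″`. -/
def M''op : V → V := fun v => ![(2 : ℂ) • v 1, (2 : ℂ) • v 2, 0, 0, -((2 : ℂ) • v 3), -((2 : ℂ) • v 4)]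

/-- The action `E″ = E + N″` of `e″`. -/
def E''op : V → V := fun v => Eop v + N''op v

/-- The action `F″ = F + M″` of `f″`. -/
def F''op (k1 k2 k3 : ℤ) : V → V := fun v => Fop k1 k2 k3 v + M''op v

/-- `f` is a polynomial in `x` of degree at most `m` (in particular `f = 0`
when `m < 0`). -/
def degOK (m : ℤ) (f : L) : Prop := ∀ n : ℤ, n < 0 ∨ m < n → coeffL f n = 0

/-- The group `G = Aut E` of invertible `3×3` matrices `A = (A_{pq}(x))` whose
entry `A_{pq}` is a polynomial in `x` of degree at most `k q − k p` (and `0`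
if `k q < k p`), and whose inverse has entries of the same form. -/
structure GElt (k : Fin 3 → ℤ) where
  A : Matrix (Fin 3) (Fin 3) L
  Ainv : Matrix (Fin 3) (Fin 3) L
  mul_inv : A * Ainv = 1
  inv_mul : Ainv * A = 1
  degA : ∀ p q, degOK (k q - k p) (A p q)
  degAinv : ∀ p q, degOK (k q - k p) (Ainv p q)

/-- The action `Int A` of `G` on `V`:
`â_{pq} = Σ_{i<j} (A_{pi}A_{qj} − A_{qi}A_{pj})·a_{ij}` for `p < q`, and
`b̂_u = det(A)·(Σ_t β_{tu}·b_t + Σ_{i<j} σ_{l(ij)}·(β_{l(ij),u})′·a_{ij})`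
where `β = A⁻¹` and `l(ij)` is the index complementary to `{i, j}`. -/
def IntAct {k : Fin 3 → ℤ} (g : GElt k) (v : V) : V :=
  let A := g.A
  let β := g.Ainv
  ![(A 0 0 * A 1 1 - A 1 0 * A 0 1) * v 0 + (A 0 0 * A 1 2 - A 1 0 * A 0 2) * v 1 +
      (A 0 1 * A 1 2 - A 1 1 * A 0 2) * v 2,
    (A 0 0 * A 2 1 - A 2 0 * A 0 1) * v 0 + (A 0 0 * A 2 2 - A 2 0 * A 0 2) * v 1 +
      (A 0 1 * A 2 2 - A 2 1 * A 0 2) * v 2,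
    (A 1 0 * A 2 1 - A 2 0 * A 1 1) * v 0 + (A 1 0 * A 2 2 - A 2 0 * A 1 2) * v 1 +
      (A 1 1 * A 2 2 - A 2 1 * A 1 2) * v 2,
    A.det * (β 0 0 * v 3 + β 1 0 * v 4 + β 2 0 * v 5 +
      D (β 2 0) * v 0 - D (β 1 0) * v 1 + D (β 0 0) * v 2),
    A.det * (β 0 1 * v 3 + β 1 1 * v 4 + β 2 1 * v 5 +
      D (β 2 1) * v 0 - D (β 1 1) * v 1 + D (β 0 1) * v 2),
    A.det * (β 0 2 * v 3 + β 1 2 * v 4 + β 2 2 * v 5 +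
      D (β 2 2) * v 0 - D (β 1 2) * v 1 + D (β 0 2) * v 2)]


/-!
`B`, `E` and `F` all respect the splitting of a cochain into its three pairs `(a₍ₜ₎, b_t)`, and on
a pair `B` is cut out by finitely many linear conditions on Laurent coefficients that depend only
on `m = d - k_t` and `κ = σ_t k_t`. Comparing coefficients, a pair whose images under `E` and `F`
are coboundaries is itself a coboundary, except for `m = 4`, where it is one up to a multiple of
`(x⁻¹, (κ/2) x⁻²)`; this needs `(m, κ) ≠ (2, 0)`, which fails only for degrees `{-2, 0, 4}`.
Since `k₁ + k₂ = 4`, the third pair always has `m = 4`, and the first (second) one has `m = 4`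
exactly when `k₃ = k₁` (`k₃ = k₂`). Hence a nontrivial invariant class is given by constants
`(c₁, c₂, c₃) ≠ 0`, and a constant automorphism whose first two columns have `2 × 2` minors
`c₃, c₂, c₁` in rows `12, 13, 23` carries `w` to it: these coincidences of degrees are exactly
what lets such a matrix be block triangular for the degrees.
-/

lemma coeffL_sub (a b : L) (n : ℤ) : coeffL (a - b) n = coeffL a n - coeffL b n := rfl

lemma eq_of_coeffL_eq {p q : L} (h : ∀ n, coeffL p n = coeffL q n) : p = q :=
  AddMonoidAlgebra.ext (Finsupp.ext h)

lemma T_eq_single (m : ℤ) : (T m : L) = AddMonoidAlgebra.single m 1 := rfl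

lemma coeffL_T (m n : ℤ) : coeffL (T m) n = if n = m then 1 else 0 := by
  rw [coeffL, T_eq_single, AddMonoidAlgebra.coeff_single, Finsupp.single_apply]
  simp [eq_comm]

lemma coeffL_T_mul (m : ℤ) (p : L) (n : ℤ) : coeffL (T m * p) n = coeffL p (n - m) := by
  rw [coeffL, T_eq_single, AddMonoidAlgebra.coeff_single_mul_apply, one_mul]
  simp [coeffL, sub_eq_neg_add]

lemma coeffL_C (c : ℂ) (n : ℤ) : coeffL (C c) n = if n = 0 then c else 0 := by
  simp [coeffL, C_apply]

lemma coeffL_D (p : L) (n : ℤ) : coeffL (D p) n = ((n : ℂ) + 1) * coeffL p (n + 1) := by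
  have hterm (k : ℤ) (a : ℂ) : (AddMonoidAlgebra.coeff (((k : ℂ) * a) • T (k - 1) : L)) n =
      if k = n + 1 then (k : ℂ) * a else 0 := by
    rw [T_eq_single, AddMonoidAlgebra.smul_single', mul_one, AddMonoidAlgebra.coeff_single,
      Finsupp.single_apply]
    congr 1
    exact propext (by omega)
  simp only [D, coeffL, AddMonoidAlgebra.coeff_finsuppSum, Finsupp.sum_apply, hterm,
    Finsupp.sum_ite_eq']
  split_ifs with h
  · push_cast; ring
  · simp [Finsupp.notMem_support_iff.mp h]

lemma D_add (p q : L) : D (p + q) = D p + D q :=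
  eq_of_coeffL_eq fun n => by simp only [coeffL_D, coeffL_add]; ring

lemma D_smul (c : ℂ) (p : L) : D (c • p) = c • D p :=
  eq_of_coeffL_eq fun n => by simp only [coeffL_D, coeffL_smul]; ring

lemma D_C (c : ℂ) : D (C c) = 0 :=
  eq_of_coeffL_eq fun n => by
    rw [coeffL_D, coeffL_C, coeffL_zero]
    split_ifs with h
    · rw [show (n : ℂ) = -1 by exact_mod_cast (by omega : n = -1)]; ring
    · rw [mul_zero]

def derivL : L →ₗ[ℂ] L where
  toFun := D
  map_add' := D_add
  map_smul' := D_smul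

lemma C_mem_Lplus (c : ℂ) : C c ∈ Lplus := fun n hn => by rw [coeffL_C, if_neg hn.ne]

def negPart (p : L) : L := AddMonoidAlgebra.ofCoeff (p.coeff.filter (· < 0))

lemma coeffL_negPart (p : L) (n : ℤ) : coeffL (negPart p) n = if n < 0 then coeffL p n else 0 :=
  Finsupp.filter_apply _ _ _

lemma sub_negPart_mem_Lplus (p : L) : p - negPart p ∈ Lplus := fun n hn => by
  rw [coeffL_sub, coeffL_negPart, if_pos hn, sub_self]

/-- `pairB1 m κ` and `pairB m κ` are the parts of `B₁` and `B` on one pair `(a₍ₜ₎, b_t)`,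
with `m = d - k_t` and `κ = σ_t k_t`. -/
def pairB1 (m : ℤ) (κ : ℂ) : Submodule ℂ (L × L) :=
  Lminus.comap ((LinearMap.mulLeft ℂ (T (m - 2))).comp (LinearMap.fst ℂ L L)) ⊓
  Lminus.comap ((LinearMap.mulLeft ℂ (T m)).comp
    (LinearMap.snd ℂ L L - κ • (LinearMap.mulLeft ℂ (T (-1))).comp (LinearMap.fst ℂ L L)))

def pairB (m : ℤ) (κ : ℂ) : Submodule ℂ (L × L) := Lplus.prod Lplus ⊔ pairB1 m κ

lemma mem_pairB1_iff {m : ℤ} {κ : ℂ} {a b : L} :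
    (a, b) ∈ pairB1 m κ ↔ (∀ n, 2 - m < n → coeffL a n = 0) ∧
      ∀ n, -m < n → coeffL b n = κ * coeffL a (n + 1) := by
  simp only [pairB1, Submodule.mem_inf, Submodule.mem_comap, LinearMap.coe_comp,
    Function.comp_apply, LinearMap.mulLeft_apply, LinearMap.sub_apply, LinearMap.smul_apply,
    LinearMap.fst_apply, LinearMap.snd_apply]
  change (∀ n, 0 < n → _) ∧ (∀ n, 0 < n → _) ↔ _
  simp only [coeffL_T_mul, coeffL_sub, coeffL_smul, sub_eq_zero, sub_neg_eq_add]
  constructor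
  · rintro ⟨ha, hb⟩
    refine ⟨fun n hn => ?_, fun n hn => ?_⟩
    · simpa using ha (n + (m - 2)) (by omega)
    · simpa using hb (n + m) (by omega)
  · rintro ⟨ha, hb⟩
    exact ⟨fun n hn => ha _ (by omega), fun n hn => by simpa using hb (n - m) (by omega)⟩

lemma coeffL_of_mem_pairB {m : ℤ} {κ : ℂ} {a b : L} (h : (a, b) ∈ pairB m κ) :
    (∀ n, 2 - m < n → n < 0 → coeffL a n = 0) ∧
      (∀ n, -m < n → n ≤ -2 → coeffL b n = κ * coeffL a (n + 1)) ∧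
      (3 ≤ m ∨ (m = 2 ∧ κ = 0) → coeffL b (-1) = 0) := by
  obtain ⟨⟨ua, ub⟩, ⟨hua, hub⟩, ⟨qa, qb⟩, hq, huq⟩ := Submodule.mem_sup.mp h
  obtain ⟨hqa, hqb⟩ := mem_pairB1_iff.mp hq
  obtain ⟨rfl, rfl⟩ := Prod.mk.inj huq
  simp only [coeffL_add]
  refine ⟨fun n h1 h2 => ?_, fun n h1 h2 => ?_, fun hm => ?_⟩
  · rw [hua n h2, hqa n h1, add_zero]
  · rw [hub n (by omega), hqb n h1, hua (n + 1) (by omega), zero_add, zero_add]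
  · rw [hub (-1) (by omega), hqb (-1) (by omega), zero_add]
    rcases hm with hm | ⟨-, rfl⟩
    · rw [show (-1 : ℤ) + 1 = 0 by norm_num, hqa 0 (by omega), mul_zero]
    · rw [zero_mul]

lemma mem_pairB_of_coeffL {m : ℤ} {κ : ℂ} {a b : L}
    (ha : ∀ n, 2 - m < n → n < 0 → coeffL a n = 0)
    (hb : ∀ n, -m < n → n ≤ -2 → coeffL b n = κ * coeffL a (n + 1))
    (hflag : 3 ≤ m ∨ (m = 2 ∧ κ = 0) → coeffL b (-1) = 0) : (a, b) ∈ pairB m κ := by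
  -- the constant term of the `U₁`-part absorbs `b₋₁` when `m = 2`
  set γ : ℂ := if m = 2 then coeffL b (-1) / κ else 0 with hγ
  have hsplit : (a, b) =
      (a - (negPart a + C γ), b - negPart b) + (negPart a + C γ, negPart b) := by
    simp
  rw [hsplit]
  refine Submodule.add_mem_sup ⟨?_, sub_negPart_mem_Lplus b⟩ (mem_pairB1_iff.mpr ⟨?_, ?_⟩)
  · rw [← sub_sub]; exact Lplus.sub_mem (sub_negPart_mem_Lplus a) (C_mem_Lplus γ)
  · intro n hn
    simp only [coeffL_add, coeffL_negPart, coeffL_C]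
    split_ifs with h1 h2 h2
    · omega
    · rw [ha n hn h1, add_zero]
    · rw [zero_add, hγ, if_neg (by omega)]
    · rw [add_zero]
  · intro n hn
    simp only [coeffL_add, coeffL_negPart, coeffL_C]
    rcases lt_trichotomy n (-1) with h | rfl | h
    · rw [if_pos (by omega), if_pos (by omega), if_neg (by omega), add_zero, hb n hn (by omega)]
    · simp only [if_pos (show (-1 : ℤ) < 0 by norm_num), show (-1 : ℤ) + 1 = 0 by norm_num,
        lt_irrefl, if_false, if_true, zero_add]
      by_cases hm : m = 2
      · rcases eq_or_ne κ 0 with hκ | hκ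
        · rw [hflag (.inr ⟨hm, hκ⟩), hκ, zero_mul]
        · rw [hγ, if_pos hm, mul_div_cancel₀ _ hκ]
      · rw [hflag (.inl (by omega)), hγ, if_neg hm, mul_zero]
    · rw [if_neg (by omega), if_neg (by omega), if_neg (by omega), zero_add, mul_zero]

lemma mem_pairB_iff {m : ℤ} {κ : ℂ} {a b : L} :
    (a, b) ∈ pairB m κ ↔
      (∀ n, 2 - m < n → n < 0 → coeffL a n = 0) ∧
      (∀ n, -m < n → n ≤ -2 → coeffL b n = κ * coeffL a (n + 1)) ∧
      (3 ≤ m ∨ (m = 2 ∧ κ = 0) → coeffL b (-1) = 0) :=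
  ⟨coeffL_of_mem_pairB, fun ⟨ha, hb, hflag⟩ => mem_pairB_of_coeffL ha hb hflag⟩

/-- The cochain whose `t`-th pair `(a₍ₜ₎, b_t)` is `pₜ`. -/
def ofPairs (p₁ p₂ p₃ : L × L) : V := ![p₃.1, p₂.1, p₁.1, p₁.2, p₂.2, p₃.2]

lemma ofPairs_eta (v : V) : ofPairs (v 2, v 3) (v 1, v 4) (v 0, v 5) = v := by
  ext i : 1; fin_cases i <;> rfl

lemma ofPairs_zero : ofPairs 0 0 0 = 0 := by
  ext i : 1; fin_cases i <;> rfl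

lemma ofPairs_add (p₁ p₂ p₃ q₁ q₂ q₃ : L × L) :
    ofPairs (p₁ + q₁) (p₂ + q₂) (p₃ + q₃) = ofPairs p₁ p₂ p₃ + ofPairs q₁ q₂ q₃ := by
  ext i : 1; fin_cases i <;> rfl

lemma ofPairs_sub (p₁ p₂ p₃ q₁ q₂ q₃ : L × L) :
    ofPairs (p₁ - q₁) (p₂ - q₂) (p₃ - q₃) = ofPairs p₁ p₂ p₃ - ofPairs q₁ q₂ q₃ := by
  ext i : 1; fin_cases i <;> rfl

lemma ofPairs_mem_B0_iff {p₁ p₂ p₃ : L × L} :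
    ofPairs p₁ p₂ p₃ ∈ B0 ↔
      p₁ ∈ Lplus.prod Lplus ∧ p₂ ∈ Lplus.prod Lplus ∧ p₃ ∈ Lplus.prod Lplus := by
  simp only [B0, ofPairs, Submodule.mem_pi, Set.mem_univ, forall_const, Fin.forall_fin_succ,
    Matrix.cons_val_zero, Matrix.cons_val_succ, Matrix.cons_val_fin_one, Submodule.mem_prod]
  tauto

lemma ofPairs_mem_B1_iff {k1 k2 k3 : ℤ} {p₁ p₂ p₃ : L × L} :
    ofPairs p₁ p₂ p₃ ∈ B1 k1 k2 k3 ↔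
      p₁ ∈ pairB1 (k2 + k3) k1 ∧ p₂ ∈ pairB1 (k1 + k3) (-k2) ∧ p₃ ∈ pairB1 (k1 + k2) k3 := by
  simp only [B1, pairB1, cndA, cndB, ofPairs, Submodule.mem_inf, Submodule.mem_comap,
    LinearMap.coe_comp, LinearMap.coe_proj, Function.comp_apply, Function.eval,
    LinearMap.mulLeft_apply, LinearMap.sub_apply, LinearMap.smul_apply, LinearMap.coe_fst,
    LinearMap.snd_apply, Matrix.cons_val_zero, Matrix.cons_val_one, Matrix.cons_val, neg_smul,
    sub_neg_eq_add]
  tauto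

lemma ofPairs_mem_B_iff {k1 k2 k3 : ℤ} {p₁ p₂ p₃ : L × L} :
    ofPairs p₁ p₂ p₃ ∈ B k1 k2 k3 ↔
      p₁ ∈ pairB (k2 + k3) k1 ∧ p₂ ∈ pairB (k1 + k3) (-k2) ∧ p₃ ∈ pairB (k1 + k2) k3 := by
  constructor
  · intro h
    obtain ⟨u, hu, q, hq, huq⟩ := Submodule.mem_sup.mp h
    rw [← ofPairs_eta u, ofPairs_mem_B0_iff] at hu
    rw [← ofPairs_eta q, ofPairs_mem_B1_iff] at hq
    have hpair (i j : Fin 6) : (ofPairs p₁ p₂ p₃ i, ofPairs p₁ p₂ p₃ j) = (u i, u j) + (q i, q j) :=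
      by rw [← huq]; rfl
    rw [show p₁ = _ from hpair 2 3, show p₂ = _ from hpair 1 4, show p₃ = _ from hpair 0 5]
    exact ⟨Submodule.add_mem_sup hu.1 hq.1, Submodule.add_mem_sup hu.2.1 hq.2.1,
      Submodule.add_mem_sup hu.2.2 hq.2.2⟩
  · rintro ⟨h₁, h₂, h₃⟩
    obtain ⟨u₁, hu₁, q₁, hq₁, rfl⟩ := Submodule.mem_sup.mp h₁
    obtain ⟨u₂, hu₂, q₂, hq₂, rfl⟩ := Submodule.mem_sup.mp h₂
    obtain ⟨u₃, hu₃, q₃, hq₃, rfl⟩ := Submodule.mem_sup.mp h₃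
    rw [ofPairs_add]
    exact Submodule.add_mem_sup (ofPairs_mem_B0_iff.mpr ⟨hu₁, hu₂, hu₃⟩)
      (ofPairs_mem_B1_iff.mpr ⟨hq₁, hq₂, hq₃⟩)

def pairE : L × L →ₗ[ℂ] L × L := derivL.prodMap derivL

def pairF (m : ℤ) (κ : ℂ) : L × L →ₗ[ℂ] L × L where
  toFun p := (((2 - m : ℤ) : ℂ) • (T 1 * p.1) - T 2 * D p.1,
    κ • p.1 - (m : ℂ) • (T 1 * p.2) - T 2 * D p.2)
  map_add' p q := by
    simp only [Prod.fst_add, Prod.snd_add, D_add, mul_add, smul_add, Prod.mk_add_mk]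
    congr 1 <;> abel
  map_smul' c p := by
    simp only [Prod.smul_fst, Prod.smul_snd, D_smul, mul_smul_comm, RingHom.id_apply,
      Prod.smul_mk, smul_sub, smul_comm c]

lemma Eop_ofPairs (p₁ p₂ p₃ : L × L) :
    Eop (ofPairs p₁ p₂ p₃) = ofPairs (pairE p₁) (pairE p₂) (pairE p₃) := by
  ext i : 1; fin_cases i <;> rfl

lemma Fop_ofPairs (k1 k2 k3 : ℤ) (p₁ p₂ p₃ : L × L) :
    Fop k1 k2 k3 (ofPairs p₁ p₂ p₃) =
      ofPairs (pairF (k2 + k3) k1 p₁) (pairF (k1 + k3) (-k2) p₂) (pairF (k1 + k2) k3 p₃) := by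
  ext i : 1; fin_cases i <;> simp [Fop, ofPairs, pairF, sub_sub, neg_smul]

lemma pairE_apply (p : L × L) : pairE p = (D p.1, D p.2) := rfl

lemma coeffL_pairF_fst (m : ℤ) (κ : ℂ) (p : L × L) (n : ℤ) :
    coeffL (pairF m κ p).1 n = (3 - m - n) * coeffL p.1 (n - 1) := by
  change coeffL (_ - _) n = _
  rw [coeffL_sub, coeffL_smul, coeffL_T_mul, coeffL_T_mul, coeffL_D, show n - 2 + 1 = n - 1 by ring]
  push_cast; ring

lemma coeffL_pairF_snd (m : ℤ) (κ : ℂ) (p : L × L) (n : ℤ) :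
    coeffL (pairF m κ p).2 n = κ * coeffL p.1 n - (m + n - 1) * coeffL p.2 (n - 1) := by
  change coeffL (_ - _ - _) n = _
  rw [coeffL_sub, coeffL_sub, coeffL_smul, coeffL_smul, coeffL_T_mul, coeffL_T_mul, coeffL_D,
    show n - 2 + 1 = n - 1 by ring]
  push_cast; ring

def basicPair (κ : ℂ) : L × L := (T (-1), (κ / 2) • T (-2))

lemma pairE_basicPair_mem (κ : ℂ) : pairE (basicPair κ) ∈ pairB 4 κ := by
  rw [pairE_apply, mem_pairB_iff]
  simp only [coeffL_D, basicPair, coeffL_smul, coeffL_T]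
  refine ⟨fun n h1 h2 => ?_, fun n h1 h2 => ?_, fun _ => ?_⟩
  · obtain rfl : n = -1 := by omega
    norm_num
  · interval_cases n <;> norm_num
    ring
  · norm_num

lemma pairF_basicPair_mem (κ : ℂ) : pairF 4 κ (basicPair κ) ∈ pairB 4 κ := by
  rw [← Prod.mk.eta (p := pairF _ _ _), mem_pairB_iff]
  simp only [coeffL_pairF_fst, coeffL_pairF_snd, basicPair, coeffL_smul, coeffL_T]
  refine ⟨fun n h1 h2 => ?_, fun n h1 h2 => ?_, fun _ => ?_⟩
  · obtain rfl : n = -1 := by omega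
    norm_num
  · interval_cases n <;> norm_num
  · norm_num; ring

lemma basicPair_not_mem_pairB (κ : ℂ) : basicPair κ ∉ pairB 4 κ := by
  rw [basicPair, mem_pairB_iff]
  intro h
  simpa [coeffL_T] using h.1 (-1) (by norm_num) (by norm_num)

lemma coeffL_fst_eq_zero_of_pairE_mem_of_pairF_mem {m : ℤ} {κ : ℂ} {p : L × L}
    (h4 : m = 4 → coeffL p.1 (-1) = 0)
    (hE : pairE p ∈ pairB m κ) (hF : pairF m κ p ∈ pairB m κ) :
    ∀ n, 2 - m < n → n < 0 → coeffL p.1 n = 0 := by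
  rw [pairE_apply, mem_pairB_iff] at hE
  rw [← Prod.mk.eta (p := pairF _ _ _), mem_pairB_iff] at hF
  intro n h1 h2
  by_cases hn : n = 3 - m
  · rcases (show m = 4 ∨ 5 ≤ m by omega) with rfl | hm
    · exact (show n = -1 by omega) ▸ h4 rfl
    · have h := hF.1 (4 - m) (by omega) (by omega)
      rw [coeffL_pairF_fst, show 4 - m - 1 = n by omega] at h
      push_cast at h
      linear_combination -h
  · have h := hE.1 (n - 1) (by omega) (by omega)
    rw [coeffL_D, show n - 1 + 1 = n by ring] at h
    have hn0 : ((n - 1 : ℤ) : ℂ) + 1 ≠ 0 := by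
      push_cast; simpa using (show n ≠ 0 by omega)
    exact (mul_eq_zero.mp h).resolve_left hn0

lemma mem_pairB_of_pairE_mem_of_pairF_mem {m : ℤ} {κ : ℂ} {p : L × L}
    (hmκ : ¬(m = 2 ∧ κ = 0)) (h4 : m = 4 → coeffL p.1 (-1) = 0)
    (hE : pairE p ∈ pairB m κ) (hF : pairF m κ p ∈ pairB m κ) : p ∈ pairB m κ := by
  have ha := coeffL_fst_eq_zero_of_pairE_mem_of_pairF_mem h4 hE hF
  obtain ⟨a, b⟩ := p
  rw [pairE_apply, mem_pairB_iff] at hE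
  rw [← Prod.mk.eta (p := pairF _ _ _), mem_pairB_iff] at hF
  simp only [coeffL_D, coeffL_pairF_fst, coeffL_pairF_snd, add_sub_cancel_right] at hE hF
  refine mem_pairB_iff.mpr ⟨ha, fun n h1 h2 => ?_, fun hm => ?_⟩
  · rcases (show n ≤ -3 ∨ n = -2 by omega) with hn | rfl
    · have h := hF.2.1 (n + 1) (by omega) (by omega)
      simp only [add_sub_cancel_right] at h
      have hmn : ((m + n : ℤ) : ℂ) ≠ 0 := Int.cast_ne_zero.mpr (by omega)
      refine mul_left_cancel₀ hmn ?_
      push_cast at h ⊢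
      linear_combination -h
    · rcases (show m = 3 ∨ 4 ≤ m by omega) with rfl | hm
      · have h := hF.2.2 (.inl le_rfl)
        norm_num at h ⊢
        linear_combination -h
      · have h := hE.2.1 (-3) (by omega) (by omega)
        norm_num [ha (-1) (by omega) (by norm_num)] at h ⊢
        exact h
  · have hm3 : 3 ≤ m := by
      rcases hm with hm | ⟨rfl, hκ⟩
      · exact hm
      · exact absurd ⟨rfl, hκ⟩ hmκ
    have h := hE.2.1 (-2) (by omega) (by norm_num)
    norm_num at h
    exact h

lemma exists_sub_smul_basicPair_mem {m : ℤ} {κ : ℂ} {p : L × L} (hmκ : ¬(m = 2 ∧ κ = 0))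
    (hE : pairE p ∈ pairB m κ) (hF : pairF m κ p ∈ pairB m κ) :
    ∃ c : ℂ, (m ≠ 4 → c = 0) ∧ p - c • basicPair κ ∈ pairB m κ := by
  by_cases hm : m = 4
  · subst hm
    refine ⟨coeffL p.1 (-1), fun h => absurd rfl h, ?_⟩
    refine mem_pairB_of_pairE_mem_of_pairF_mem hmκ (fun _ => ?_) ?_ ?_
    · simp [basicPair, coeffL_sub, coeffL_smul, coeffL_T]
    · rw [map_sub, map_smul]; exact sub_mem hE (Submodule.smul_mem _ _ (pairE_basicPair_mem κ))
    · rw [map_sub, map_smul]; exact sub_mem hF (Submodule.smul_mem _ _ (pairF_basicPair_mem κ))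
  · refine ⟨0, fun _ => rfl, ?_⟩
    rw [zero_smul, sub_zero]
    exact mem_pairB_of_pairE_mem_of_pairF_mem hmκ (fun h => absurd h hm) hE hF

def minor01 {K : Type*} [CommRing K] (M : Matrix (Fin 3) (Fin 3) K) (p q : Fin 3) : K :=
  M p 0 * M q 1 - M q 0 * M p 1

lemma exists_blockTriangular_minor01 {K α : Type*} [Field K] [Preorder α] (k : Fin 3 → α)
    (c₁ c₂ c₃ : K) (hc : c₁ ≠ 0 ∨ c₂ ≠ 0 ∨ c₃ ≠ 0)
    (h₁ : c₁ ≠ 0 → k 2 = k 0) (h₂ : c₂ ≠ 0 → k 2 = k 1) :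
    ∃ M : Matrix (Fin 3) (Fin 3) K, M.BlockTriangular k ∧ M.det ≠ 0 ∧
      minor01 M 1 2 = c₁ ∧ minor01 M 0 2 = c₂ ∧ minor01 M 0 1 = c₃ := by
  by_cases hc₃ : c₃ = 0
  · by_cases hc₁ : c₁ = 0
    · have hc₂ : c₂ ≠ 0 := by tauto
      refine ⟨!![1, 0, 0; 0, 0, 1; 0, c₂, 0], fun i j hij => ?_, ?_⟩
      · fin_cases i <;> fin_cases j <;> simp at hij ⊢ <;> simp [h₂ hc₂] at hij
      · simp [Matrix.det_fin_three, minor01, hc₁, hc₂, hc₃]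
    · refine ⟨!![0, c₂, 1; 0, c₁, 0; -1, 0, 0], fun i j hij => ?_, ?_⟩
      · fin_cases i <;> fin_cases j <;> simp at hij ⊢ <;> try simp [h₁ hc₁] at hij
        by_contra h
        simp [← h₁ hc₁, ← h₂ h] at hij
      · simp [Matrix.det_fin_three, minor01, hc₁, hc₃]
  · refine ⟨!![1, 0, 0; 0, c₃, 0; -c₁ / c₃, c₂, 1], fun i j hij => ?_, ?_⟩
    · fin_cases i <;> fin_cases j <;> simp [hc₃] at hij ⊢ <;> by_contra h
      exacts [by simp [h₁ h] at hij, by simp [h₂ h] at hij]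
    · simp [Matrix.det_fin_three, minor01, hc₃]

lemma degOK_map_C {k : Fin 3 → ℤ} {N : Matrix (Fin 3) (Fin 3) ℂ} (hN : N.BlockTriangular k)
    (p q : Fin 3) : degOK (k q - k p) (N.map C p q) := by
  intro n hn
  rw [Matrix.map_apply, coeffL_C]
  split_ifs with h
  · rw [hN (by omega : k q < k p)]
  · rfl

def GElt.ofConst {k : Fin 3 → ℤ} (M : Matrix (Fin 3) (Fin 3) ℂ) (hM : M.BlockTriangular k)
    (hdet : M.det ≠ 0) : GElt k where
  A := M.map C
  Ainv := M⁻¹.map C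
  mul_inv := by
    rw [← Matrix.map_mul, M.mul_nonsing_inv (isUnit_iff_ne_zero.mpr hdet),
      Matrix.map_one _ (map_zero C) (map_one C)]
  inv_mul := by
    rw [← Matrix.map_mul, M.nonsing_inv_mul (isUnit_iff_ne_zero.mpr hdet),
      Matrix.map_one _ (map_zero C) (map_one C)]
  degA := degOK_map_C hM
  degAinv :=
    have := M.invertibleOfIsUnitDet (isUnit_iff_ne_zero.mpr hdet)
    degOK_map_C (Matrix.blockTriangular_inv_of_blockTriangular hM)

lemma IntAct_ofConst {k : Fin 3 → ℤ} (M : Matrix (Fin 3) (Fin 3) ℂ) (hM : M.BlockTriangular k)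
    (hdet : M.det ≠ 0) (κ : ℂ) :
    IntAct (GElt.ofConst M hM hdet) (ofPairs 0 0 (basicPair κ)) =
      ofPairs (minor01 M 1 2 • basicPair κ) (minor01 M 0 2 • basicPair (-κ))
        (minor01 M 0 1 • basicPair κ) := by
  have hadj (u : Fin 3) : M.det * M⁻¹ 2 u = M.adjugate 2 u := by
    rw [Matrix.inv_def, Matrix.smul_apply, smul_eq_mul, Ring.inverse_eq_inv',
      mul_inv_cancel_left₀ hdet]
  have hdetC : (M.map C).det = C M.det := (RingHom.map_det C M).symm
  ext i : 1
  fin_cases i <;>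
    simp only [IntAct, GElt.ofConst, Matrix.map_apply, ofPairs, basicPair, smul_eq_C_mul,
      Prod.fst_zero, Prod.snd_zero, Prod.smul_mk, Matrix.cons_val_zero, Matrix.cons_val_one,
      Matrix.cons_val, Fin.isValue, Fin.reduceFinMk, mul_zero, add_zero, zero_add, zero_mul,
      sub_zero, hdetC, D_C, minor01, map_sub, map_mul]
  all_goals
    rw [← mul_assoc, ← map_mul C M.det, hadj, Matrix.adjugate_fin_three]
    simp only [Matrix.of_apply, Matrix.cons_val', Matrix.cons_val_zero, Matrix.cons_val_one,
      Matrix.cons_val, Matrix.cons_val_fin_one, map_add, map_sub, map_neg, map_mul, neg_div]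
    ring

lemma smul_basicPair_congr {c κ κ' : ℂ} (h : c ≠ 0 → κ = κ') :
    c • basicPair κ = c • basicPair κ' := by
  rcases eq_or_ne c 0 with rfl | hc
  · simp only [zero_smul]
  · rw [h hc]

lemma not_degenerate_of_multiset_ne {k1 k2 k3 : ℤ} (hk2 : k2 = 4 - k1)
    (hmul : ({k1, k2, k3} : Multiset ℤ) ≠ ({-2, 0, 4} : Multiset ℤ)) :
    ¬(k2 + k3 = 2 ∧ (k1 : ℂ) = 0) ∧ ¬(k1 + k3 = 2 ∧ -(k2 : ℂ) = 0) := by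
  constructor
  · rintro ⟨h, hk1⟩
    obtain rfl : k1 = 0 := by exact_mod_cast hk1
    obtain ⟨rfl, rfl⟩ : k2 = 4 ∧ k3 = -2 := by omega
    exact hmul (by decide)
  · rintro ⟨h, hk2'⟩
    obtain rfl : k2 = 0 := by exact_mod_cast neg_eq_zero.mp hk2'
    obtain ⟨rfl, rfl⟩ : k1 = 4 ∧ k3 = -2 := by omega
    exact hmul (by decide)

lemma exists_sub_ofPairs_basicPair_mem {k1 k2 k3 : ℤ} (hk2 : k2 = 4 - k1)
    (hmul : ({k1, k2, k3} : Multiset ℤ) ≠ ({-2, 0, 4} : Multiset ℤ)) {z : V}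
    (hEz : Eop z ∈ B k1 k2 k3) (hFz : Fop k1 k2 k3 z ∈ B k1 k2 k3) :
    ∃ c₁ c₂ c₃ : ℂ, (c₁ ≠ 0 → k3 = k1) ∧ (c₂ ≠ 0 → k3 = k2) ∧
      z - ofPairs (c₁ • basicPair k3) (c₂ • basicPair (-k3)) (c₃ • basicPair k3) ∈ B k1 k2 k3 := by
  rw [← ofPairs_eta z, Eop_ofPairs, ofPairs_mem_B_iff] at hEz
  rw [← ofPairs_eta z, Fop_ofPairs, ofPairs_mem_B_iff] at hFz
  obtain ⟨hne₁, hne₂⟩ := not_degenerate_of_multiset_ne hk2 hmul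
  obtain ⟨c₁, hc₁, h₁⟩ := exists_sub_smul_basicPair_mem hne₁ hEz.1 hFz.1
  obtain ⟨c₂, hc₂, h₂⟩ := exists_sub_smul_basicPair_mem hne₂ hEz.2.1 hFz.2.1
  obtain ⟨c₃, -, h₃⟩ := exists_sub_smul_basicPair_mem (by omega) hEz.2.2 hFz.2.2
  have e₁ (h : c₁ ≠ 0) : k3 = k1 := by have := mt hc₁ h; omega
  have e₂ (h : c₂ ≠ 0) : k3 = k2 := by have := mt hc₂ h; omega
  refine ⟨c₁, c₂, c₃, e₁, e₂, ?_⟩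
  rw [smul_basicPair_congr fun h => congrArg Int.cast (e₁ h),
    smul_basicPair_congr fun h => congrArg (fun k : ℤ => -(k : ℂ)) (e₂ h),
    ← ofPairs_eta z, ← ofPairs_sub, ofPairs_mem_B_iff]
  exact ⟨h₁, h₂, h₃⟩

/-- If `k₂ = 4 − k₁` and the multiset `{k₁, k₂, k₃}` is not `{−2, 0, 4}`, there
is a unique up to isomorphism 𝔰-even-homogeneous non-split supermanifold with
retract `(k₁, 4−k₁, k₃)`, corresponding to the class of
`w = (x⁻¹, 0, 0, 0, 0, (k₃/2)x⁻²)`. -/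
theorem stmt_13 (k1 k2 k3 : ℤ) (hk2 : k2 = 4 - k1)
    (hmul : ({k1, k2, k3} : Multiset ℤ) ≠ ({-2, 0, 4} : Multiset ℤ))
    (w : V) (hw : w = ![T (-1), 0, 0, 0, 0, ((k3 : ℂ) / 2) • T (-2)]) :
    Eop w ∈ B k1 k2 k3 ∧ Fop k1 k2 k3 w ∈ B k1 k2 k3 ∧ w ∉ B k1 k2 k3 ∧
    ∀ z : V, Eop z ∈ B k1 k2 k3 → Fop k1 k2 k3 z ∈ B k1 k2 k3 → z ∉ B k1 k2 k3 →
      ∃ g : GElt ![k1, k2, k3], IntAct g w - z ∈ B k1 k2 k3 := by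
  obtain rfl : w = ofPairs 0 0 (basicPair k3) := hw
  have hm₃ : k1 + k2 = 4 := by omega
  refine ⟨?_, ?_, ?_, fun z hEz hFz hz => ?_⟩
  · rw [Eop_ofPairs, ofPairs_mem_B_iff, map_zero, hm₃]
    exact ⟨zero_mem _, zero_mem _, pairE_basicPair_mem _⟩
  · rw [Fop_ofPairs, ofPairs_mem_B_iff, map_zero, map_zero, hm₃]
    exact ⟨zero_mem _, zero_mem _, pairF_basicPair_mem _⟩
  · rw [ofPairs_mem_B_iff, hm₃]
    exact fun h => basicPair_not_mem_pairB _ h.2.2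
  obtain ⟨c₁, c₂, c₃, e₁, e₂, hzc⟩ := exists_sub_ofPairs_basicPair_mem hk2 hmul hEz hFz
  have hc : c₁ ≠ 0 ∨ c₂ ≠ 0 ∨ c₃ ≠ 0 := by
    by_contra! h
    obtain ⟨rfl, rfl, rfl⟩ := h
    exact hz (by simpa only [zero_smul, ofPairs_zero, sub_zero] using hzc)
  obtain ⟨M, hM, hdet, hM₁, hM₂, hM₃⟩ :=
    exists_blockTriangular_minor01 ![k1, k2, k3] c₁ c₂ c₃ hc e₁ e₂
  refine ⟨GElt.ofConst M hM hdet, sub_mem_comm_iff.mp ?_⟩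
  rwa [IntAct_ofConst, hM₁, hM₂, hM₃]
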